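/- arXiv:1706.08989 — 9 statements merged into one kernel-verified Lean document; each statement's English description precedes it below -/
import Mathlib

section
/- For every integer n ≥ 2: (1/3)·(jQ^{(3)}_n − 4·jQ^{(3)}_{n−2}) equals 2 − i − j + 2k if n ≡ 0 (mod 3), equals −1 − i + 2j − k if n ≡ 1 (mod 3), and equals −1 + 2i − j − k if n ≡ 2 (mod 3). -/
/-!
The characteristic polynomial of the recurrence factors as `(X - 2)(X² + X + 1)`, so the operator
`x ↦ x(n + 2) - 4 x(n)` kills the `2ⁿ` component of any solution and leaves a `3`-periodic
sequence. For `jL3` it is `3 · (-1, 2, -1, …)`, and since `jQ` depends linearly on the sequence,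
`(jQ (n + 2) - 4 jQ n) / 3` is the quaternion built from that periodic sequence.
-/

open Quaternion

/-- Third order Jacobsthal numbers. -/
def J3 : ℕ → ℤ
  | 0 => 0
  | 1 => 1
  | 2 => 1
  | n + 3 => J3 (n + 2) + J3 (n + 1) + 2 * J3 n

/-- Third order Jacobsthal-Lucas numbers. -/
def jL3 : ℕ → ℤ
  | 0 => 2
  | 1 => 1
  | 2 => 5
  | n + 3 => jL3 (n + 2) + jL3 (n + 1) + 2 * jL3 n

/-- The quaternion unit `i`. -/
noncomputable def qi : ℍ[ℝ] := ⟨0, 1, 0, 0⟩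
/-- The quaternion unit `j`. -/
noncomputable def qj : ℍ[ℝ] := ⟨0, 0, 1, 0⟩
/-- The quaternion unit `k`. -/
noncomputable def qk : ℍ[ℝ] := ⟨0, 0, 0, 1⟩

/-- The `n`-th third order Jacobsthal quaternion. -/
noncomputable def JQ (n : ℕ) : ℍ[ℝ] :=
  (J3 n : ℝ) + (J3 (n + 1) : ℝ) * qi + (J3 (n + 2) : ℝ) * qj + (J3 (n + 3) : ℝ) * qk

/-- The `n`-th third order Jacobsthal-Lucas quaternion. -/
noncomputable def jQ (n : ℕ) : ℍ[ℝ] :=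
  (jL3 n : ℝ) + (jL3 (n + 1) : ℝ) * qi + (jL3 (n + 2) : ℝ) * qj + (jL3 (n + 3) : ℝ) * qk

-- `(X² + X - 2)(X³ - X² - X - 2) = (X² - 4)(X³ - 1)`
theorem periodic_add_two_sub_four_mul {R : Type*} [CommRing R] {x : ℕ → R}
    (hx : ∀ n, x (n + 3) = x (n + 2) + x (n + 1) + 2 * x n) :
    Function.Periodic (fun n ↦ x (n + 2) - 4 * x n) 3 := by
  intro n
  linear_combination hx (n + 2) + hx (n + 1) - 2 * hx n

@[norm_cast]
theorem Quaternion.coe_ofNat {R : Type*} [CommRing R] (n : ℕ) [n.AtLeastTwo] :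
    ((ofNat(n) : R) : ℍ[R]) = ofNat(n) :=
  rfl

theorem Quaternion.coe_eq_smul_one {R : Type*} [CommRing R] (r : R) : (r : ℍ[R]) = r • 1 :=
  Algebra.algebraMap_eq_smul_one r

theorem jL3_add_three (n : ℕ) : jL3 (n + 3) = jL3 (n + 2) + jL3 (n + 1) + 2 * jL3 n := by
  rw [jL3]

def jL3Excess (n : ℕ) : ℤ := if n % 3 = 1 then 2 else -1

theorem jL3_add_two_sub_four_mul (n : ℕ) : jL3 (n + 2) - 4 * jL3 n = 3 * jL3Excess n := by
  rw [← (periodic_add_two_sub_four_mul jL3_add_three).map_mod_nat n, jL3Excess]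
  have : n % 3 < 3 := Nat.mod_lt _ three_pos
  interval_cases n % 3 <;> rfl

noncomputable def seqQuaternion (x : ℕ → ℝ) (n : ℕ) : ℍ[ℝ] :=
  (x n : ℍ[ℝ]) + x (n + 1) * qi + x (n + 2) * qj + x (n + 3) * qk

theorem jQ_eq_seqQuaternion (n : ℕ) : jQ n = seqQuaternion (fun k ↦ jL3 k) n := rfl

theorem one_div_three_mul_seqQuaternion_add_two_sub_four_mul (x : ℕ → ℝ) (n : ℕ) :
    (1 / 3 : ℍ[ℝ]) * (seqQuaternion x (n + 2) - 4 * seqQuaternion x n) =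
      seqQuaternion (fun k ↦ (x (k + 2) - 4 * x k) / 3) n := by
  rw [show (1 / 3 : ℍ[ℝ]) = ((1 / 3 : ℝ) : ℍ[ℝ]) by
      rw [Quaternion.coe_div, Quaternion.coe_one, Quaternion.coe_ofNat],
    show (4 : ℍ[ℝ]) = ((4 : ℝ) : ℍ[ℝ]) by norm_cast]
  simp only [seqQuaternion, Quaternion.coe_eq_smul_one, smul_mul_assoc, one_mul]
  module

theorem third_order_jacobsthal_lucas_quaternion_identity (n : ℕ) (hn : 2 ≤ n) :
    (n % 3 = 0 → (1 / 3 : ℍ[ℝ]) * (jQ n - 4 * jQ (n - 2)) = 2 - qi - qj + 2 * qk) ∧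
    (n % 3 = 1 → (1 / 3 : ℍ[ℝ]) * (jQ n - 4 * jQ (n - 2)) = -1 - qi + 2 * qj - qk) ∧
    (n % 3 = 2 → (1 / 3 : ℍ[ℝ]) * (jQ n - 4 * jQ (n - 2)) = -1 + 2 * qi - qj - qk) := by
  obtain ⟨m, rfl⟩ : ∃ m, n = m + 2 := ⟨n - 2, by omega⟩
  have hexcess : (fun k ↦ ((jL3 (k + 2) : ℝ) - 4 * jL3 k) / 3) = fun k ↦ (jL3Excess k : ℝ) := by
    funext k
    rw [div_eq_iff three_ne_zero]
    exact_mod_cast (jL3_add_two_sub_four_mul k).trans (mul_comm _ _)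
  rw [Nat.add_sub_cancel, jQ_eq_seqQuaternion, jQ_eq_seqQuaternion,
    one_div_three_mul_seqQuaternion_add_two_sub_four_mul, hexcess]
  refine ⟨fun h ↦ ?_, fun h ↦ ?_, fun h ↦ ?_⟩ <;>
  · simp only [seqQuaternion, jL3Excess]
    split_ifs <;> first | omega | (push_cast; noncomm_ring)
end

section
/- Let N(q) denote the quaternion norm N(q) = q₀² + q₁² + q₂² + q₃² for q = q₀ + i·q₁ + j·q₂ + k·q₃. For every integer n ≥ 0: 49·N(JQ^{(3)}_n) equals 340·2^{2n} − 64·2^n + 18 if n ≡ 0 (mod 3), equals 340·2^{2n} + 68·2^n + 23 if n ≡ 1 (mod 3), and equals 340·2^{2n} − 4·2^n + 15 if n ≡ 2 (mod 3). -/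
open Quaternion

/-- The quaternion norm `N(q) = q₀² + q₁² + q₂² + q₃²`. -/
noncomputable def qnorm (q : ℍ[ℝ]) : ℝ :=
  q.re ^ 2 + q.imI ^ 2 + q.imJ ^ 2 + q.imK ^ 2

/-! The characteristic polynomial of the recurrence factors as
`x³ - x² - x - 2 = (x - 2)(x² + x + 1)`, whose second factor has the primitive cube roots of unity
as roots. Hence `7 J₃(n) = 2ⁿ⁺¹ + c(n)` where `c = J3Periodic` has period 3, takes the values
`-2, 3, -1` and sums to zero over a period. Squaring and adding four consecutive instances of this
closed form gives `49 N(JQₙ)`, in which only `c(n), c(n+1), c(n+2)` depend on `n mod 3`. -/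

def J3Periodic (n : ℕ) : ℤ :=
  match n % 3 with
  | 0 => -2
  | 1 => 3
  | _ => -1

lemma J3Periodic_add_three (n : ℕ) : J3Periodic (n + 3) = J3Periodic n := by
  simp [J3Periodic]

lemma J3Periodic_add_add (n : ℕ) : J3Periodic n + J3Periodic (n + 1) + J3Periodic (n + 2) = 0 := by
  have : n % 3 < 3 := Nat.mod_lt n (by norm_num)
  interval_cases h : n % 3 <;> simp [J3Periodic, Nat.add_mod, h]

lemma seven_mul_J3 : ∀ n : ℕ, 7 * J3 n = 2 ^ (n + 1) + J3Periodic n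
  | 0 => rfl
  | 1 => rfl
  | 2 => rfl
  | n + 3 => by
    rw [J3, J3Periodic_add_three]
    linear_combination seven_mul_J3 (n + 2) + seven_mul_J3 (n + 1) + 2 * seven_mul_J3 n
      + J3Periodic_add_add n

lemma qnorm_JQ (n : ℕ) :
    qnorm (JQ n) =
      (J3 n : ℝ) ^ 2 + (J3 (n + 1) : ℝ) ^ 2 + (J3 (n + 2) : ℝ) ^ 2 + (J3 (n + 3) : ℝ) ^ 2 := by
  simp only [qnorm, JQ, re_add, re_coe, re_mul, imI_coe, zero_mul, sub_zero, imJ_coe, imK_coe,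
    imI_add, imI_mul, add_zero, zero_add, imJ_add, imJ_mul, imK_add, imK_mul]
  simp [qi, qj, qk]

lemma forty_nine_mul_qnorm_JQ (n : ℕ) :
    49 * qnorm (JQ n) = ∑ i ∈ Finset.range 4, ((2 : ℝ) ^ (n + i + 1) + J3Periodic (n + i)) ^ 2 := by
  have h (k : ℕ) : (2 : ℝ) ^ (k + 1) + J3Periodic k = 7 * J3 k := by
    exact_mod_cast (seven_mul_J3 k).symm
  simp only [qnorm_JQ, h, Finset.sum_range_succ, Finset.sum_range_zero, add_zero, zero_add]
  ring

theorem third_order_jacobsthal_quaternion_norm (n : ℕ) :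
    (n % 3 = 0 → 49 * qnorm (JQ n) = 340 * 2 ^ (2 * n) - 64 * 2 ^ n + 18) ∧
    (n % 3 = 1 → 49 * qnorm (JQ n) = 340 * 2 ^ (2 * n) + 68 * 2 ^ n + 23) ∧
    (n % 3 = 2 → 49 * qnorm (JQ n) = 340 * 2 ^ (2 * n) - 4 * 2 ^ n + 15) := by
  simp only [forty_nine_mul_qnorm_JQ, Finset.sum_range_succ, Finset.sum_range_zero, add_zero,
    zero_add, J3Periodic_add_three]
  refine ⟨fun h => ?_, fun h => ?_, fun h => ?_⟩
  · obtain ⟨h₀, h₁, h₂⟩ : J3Periodic n = -2 ∧ J3Periodic (n + 1) = 3 ∧ J3Periodic (n + 2) = -1 := by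
      simp [J3Periodic, Nat.add_mod, h]
    push_cast [h₀, h₁, h₂]
    ring
  · obtain ⟨h₀, h₁, h₂⟩ : J3Periodic n = 3 ∧ J3Periodic (n + 1) = -1 ∧ J3Periodic (n + 2) = -2 := by
      simp [J3Periodic, Nat.add_mod, h]
    push_cast [h₀, h₁, h₂]
    ring
  · obtain ⟨h₀, h₁, h₂⟩ : J3Periodic n = -1 ∧ J3Periodic (n + 1) = -2 ∧ J3Periodic (n + 2) = 3 := by
      simp [J3Periodic, Nat.add_mod, h]
    push_cast [h₀, h₁, h₂]
    ring
end

section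
/- For every integer n ≥ 0, 3·JQ^{(3)}_n + jQ^{(3)}_n = 2^{n+1}·(1 + 2i + 4j + 8k). -/
open Quaternion

theorem three_mul_J3_add_jL3 : ∀ n : ℕ, 3 * J3 n + jL3 n = 2 ^ (n + 1)
  | 0 | 1 | 2 => rfl
  | n + 3 => by
    rw [J3, jL3]
    linear_combination three_mul_J3_add_jL3 (n + 2) + three_mul_J3_add_jL3 (n + 1) +
      2 * three_mul_J3_add_jL3 n

theorem third_order_jacobsthal_quaternion_sum_with_lucas (n : ℕ) :
    3 * JQ n + jQ n = (2 : ℍ[ℝ]) ^ (n + 1) * (1 + 2 * qi + 4 * qj + 8 * qk) := by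
  have h (m : ℕ) : 3 * (J3 m : ℝ) + jL3 m = 2 ^ (m + 1) := by
    exact_mod_cast three_mul_J3_add_jL3 m
  have h_pow : (2 : ℍ[ℝ]) ^ (n + 1) = ((2 ^ (n + 1) : ℝ) : ℍ[ℝ]) := by norm_cast
  simp only [JQ, jQ, h_pow, Quaternion.coe_eq_smul_one, smul_mul_assoc, one_mul,
    ← Nat.ofNat_nsmul_eq_mul]
  linear_combination (norm := module)
    h n • (1 : ℍ[ℝ]) + h (n + 1) • qi + h (n + 2) • qj + h (n + 3) • qk
end

section
/- For every integer n ≥ 0: jQ^{(3)}_n − 4·JQ^{(3)}_n equals 2 − 3i + j + 2k if n ≡ 0 (mod 3), equals −3 + i + 2j − 3k if n ≡ 1 (mod 3), and equals 1 + 2i − 3j + k if n ≡ 2 (mod 3). -/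
open Quaternion

/-
The characteristic polynomial of the recurrence factors as `x³ - x² - x - 2 = (x - 2)(x² + x + 1)`,
so the sum of three consecutive terms of any solution doubles at each step. The difference
`j⁽³⁾ₙ - 4 J⁽³⁾ₙ` solves the recurrence with initial values `2, -3, 1`, whose sum is `0`; hence its
three-term sums vanish and it is `3`-periodic, and so is `jQ⁽³⁾ₙ - 4 JQ⁽³⁾ₙ`.
-/

section ThirdOrderRecurrence

variable {R : Type*} [CommRing R] {u : ℕ → R}

theorem sum_three_succ_eq_two_mul (hu : ∀ n, u (n + 3) = u (n + 2) + u (n + 1) + 2 * u n)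
    (n : ℕ) : u (n + 1) + u (n + 2) + u (n + 3) = 2 * (u n + u (n + 1) + u (n + 2)) := by
  rw [hu]; ring

theorem sum_three_eq_zero (hu : ∀ n, u (n + 3) = u (n + 2) + u (n + 1) + 2 * u n)
    (h₀ : u 0 + u 1 + u 2 = 0) (n : ℕ) : u n + u (n + 1) + u (n + 2) = 0 := by
  induction n with
  | zero => exact h₀
  | succ n ih => rw [sum_three_succ_eq_two_mul hu, ih, mul_zero]

theorem periodic_three_of_sum_eq_zero (hu : ∀ n, u (n + 3) = u (n + 2) + u (n + 1) + 2 * u n)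
    (h₀ : u 0 + u 1 + u 2 = 0) : Function.Periodic u 3 := fun n => by
  linear_combination hu n + sum_three_eq_zero hu h₀ n

end ThirdOrderRecurrence

def jL3SubFourJ3 (n : ℕ) : ℤ := jL3 n - 4 * J3 n

theorem jL3SubFourJ3_periodic : Function.Periodic jL3SubFourJ3 3 :=
  periodic_three_of_sum_eq_zero (fun n => by simp only [jL3SubFourJ3, J3, jL3]; ring) (by decide)

theorem jQ_sub_four_mul_JQ (n : ℕ) :
    jQ n - 4 * JQ n = (jL3SubFourJ3 n : ℍ[ℝ]) + (jL3SubFourJ3 (n + 1) : ℍ[ℝ]) * qi +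
      (jL3SubFourJ3 (n + 2) : ℍ[ℝ]) * qj + (jL3SubFourJ3 (n + 3) : ℍ[ℝ]) * qk := by
  simp only [jQ, JQ, jL3SubFourJ3, Quaternion.coe_intCast]
  push_cast
  noncomm_ring

theorem jQ_sub_four_mul_JQ_periodic : Function.Periodic (fun n => jQ n - 4 * JQ n) 3 := fun n => by
  simp only [jQ_sub_four_mul_JQ, add_right_comm n 3, jL3SubFourJ3_periodic n,
    jL3SubFourJ3_periodic (n + 1), jL3SubFourJ3_periodic (n + 2), jL3SubFourJ3_periodic (n + 3)]

theorem third_order_jacobsthal_lucas_minus_four_jacobsthal (n : ℕ) :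
    (n % 3 = 0 → jQ n - 4 * JQ n = 2 - 3 * qi + qj + 2 * qk) ∧
    (n % 3 = 1 → jQ n - 4 * JQ n = -3 + qi + 2 * qj - 3 * qk) ∧
    (n % 3 = 2 → jQ n - 4 * JQ n = 1 + 2 * qi - 3 * qj + qk) := by
  rw [← jQ_sub_four_mul_JQ_periodic.map_mod_nat]
  refine ⟨fun h => ?_, fun h => ?_, fun h => ?_⟩ <;>
  · norm_num [h, jQ_sub_four_mul_JQ, jL3SubFourJ3, J3, jL3]
    noncomm_ring
end

section
/- For every integer n ≥ 0, jQ^{(3)}_{n+1} + jQ^{(3)}_n = 3·JQ^{(3)}_{n+2}. -/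
open Quaternion

/-!
Both `n ↦ j_{n+1} + j_n` and `n ↦ 3 J_{n+2}` solve the linear recurrence
`u_{n+3} = u_{n+2} + u_{n+1} + 2 u_n`, whose solutions are determined by their first three terms;
these agree (`3, 6, 15`), so the two sequences coincide. The quaternion identity follows because
the quaternion built from four consecutive terms of a sequence is additive in the sequence.
-/

def jacobsthal3Recurrence : LinearRecurrence ℤ := ⟨3, ![2, 1, 1]⟩

theorem LinearRecurrence.IsSolution.comp_add_right {R : Type*} [CommSemiring R]
    {E : LinearRecurrence R} {u : ℕ → R} (hu : E.IsSolution u) (k : ℕ) :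
    E.IsSolution fun n => u (n + k) := fun n => by
  simpa only [add_right_comm] using hu (n + k)

theorem jacobsthal3Recurrence_isSolution_iff (u : ℕ → ℤ) :
    jacobsthal3Recurrence.IsSolution u ↔ ∀ n, u (n + 3) = u (n + 2) + u (n + 1) + 2 * u n := by
  change (∀ n, u (n + 3) = ∑ i : Fin 3, ![(2 : ℤ), 1, 1] i * u (n + i)) ↔ _
  refine forall_congr' fun n => ?_
  simp only [Fin.sum_univ_three, Matrix.cons_val_zero, Matrix.cons_val_one,
    Matrix.cons_val_two, Matrix.tail_cons, Matrix.head_cons, Fin.val_zero, Fin.val_one, Fin.val_two]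
  ring_nf

theorem isSolution_J3 : jacobsthal3Recurrence.IsSolution J3 :=
  (jacobsthal3Recurrence_isSolution_iff J3).2 fun _ => rfl

theorem isSolution_jL3 : jacobsthal3Recurrence.IsSolution jL3 :=
  (jacobsthal3Recurrence_isSolution_iff jL3).2 fun _ => rfl

theorem jL3_succ_add_jL3 : (fun n => jL3 (n + 1)) + jL3 = (3 : ℤ) • fun n => J3 (n + 2) := by
  have hlhs : (fun n => jL3 (n + 1)) + jL3 ∈ jacobsthal3Recurrence.solSpace :=
    add_mem (isSolution_jL3.comp_add_right 1) isSolution_jL3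
  have hrhs : (3 : ℤ) • (fun n => J3 (n + 2)) ∈ jacobsthal3Recurrence.solSpace :=
    Submodule.smul_mem _ 3 (isSolution_J3.comp_add_right 2)
  refine (jacobsthal3Recurrence.eq_iff_eqOn_range_order _ _ hlhs hrhs).2 fun n hn => ?_
  replace hn : n < 3 := Finset.mem_range.1 hn
  interval_cases n <;> rfl

noncomputable def quaternionOfSeq (n : ℕ) : (ℕ → ℤ) →+ ℍ[ℝ] where
  toFun u := (u n : ℝ) + (u (n + 1) : ℝ) * qi + (u (n + 2) : ℝ) * qj + (u (n + 3) : ℝ) * qk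
  map_zero' := by simp
  map_add' u v := by
    simp only [Pi.add_apply, Int.cast_add, Quaternion.coe_add, add_mul]
    abel

theorem quaternionOfSeq_J3 (n : ℕ) : quaternionOfSeq n J3 = JQ n := rfl

theorem quaternionOfSeq_jL3 (n : ℕ) : quaternionOfSeq n jL3 = jQ n := rfl

theorem quaternionOfSeq_comp_add_right (u : ℕ → ℤ) (n k : ℕ) :
    quaternionOfSeq n (fun m => u (m + k)) = quaternionOfSeq (n + k) u := by
  simp only [quaternionOfSeq, AddMonoidHom.coe_mk, ZeroHom.coe_mk, add_right_comm _ k]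

theorem third_order_jacobsthal_lucas_quaternion_sum_identity (n : ℕ) :
    jQ (n + 1) + jQ n = 3 * JQ (n + 2) :=
  calc jQ (n + 1) + jQ n
      = quaternionOfSeq n ((fun m => jL3 (m + 1)) + jL3) := by
        rw [map_add, quaternionOfSeq_comp_add_right, quaternionOfSeq_jL3, quaternionOfSeq_jL3]
    _ = quaternionOfSeq n ((3 : ℤ) • fun m => J3 (m + 2)) := by rw [jL3_succ_add_jL3]
    _ = 3 * JQ (n + 2) := by
        rw [map_zsmul, quaternionOfSeq_comp_add_right, quaternionOfSeq_J3, zsmul_eq_mul,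
          Int.cast_ofNat]
end

section
/- For every integer n ≥ 0: jQ^{(3)}_n − JQ^{(3)}_{n+2} equals 1 − i + k if n ≡ 0 (mod 3), equals −1 + j − k if n ≡ 1 (mod 3), and equals i − j if n ≡ 2 (mod 3). -/
open Quaternion

/-!
The difference `d n = jL3 n - J3 (n + 2)` again satisfies the third order recurrence, whose
characteristic polynomial is `(X - 2) (X ^ 2 + X + 1)`. The sums of three consecutive terms of such
a sequence double at each step; for `d` the first one is `1 - 1 + 0 = 0`, so they all vanish and
the recurrence collapses to `d (n + 3) = d n`. The coefficients of `jQ n - JQ (n + 2)` are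
`d n, …, d (n + 3)`, hence determined by `n % 3` through `d 0 = 1`, `d 1 = -1`, `d 2 = 0`.
-/

def IsJacobsthal3Rec {R : Type*} [Ring R] (u : ℕ → R) : Prop :=
  ∀ n, u (n + 3) = u (n + 2) + u (n + 1) + 2 * u n

namespace IsJacobsthal3Rec

variable {R : Type*} [Ring R] {u v : ℕ → R}

theorem sub (hu : IsJacobsthal3Rec u) (hv : IsJacobsthal3Rec v) : IsJacobsthal3Rec (u - v) :=
  fun n => by simp only [Pi.sub_apply, hu n, hv n]; noncomm_ring

theorem comp_add (hu : IsJacobsthal3Rec u) (k : ℕ) : IsJacobsthal3Rec (fun n => u (n + k)) :=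
  fun n => by simpa only [Nat.add_right_comm _ k] using hu (n + k)

theorem sum_three_succ (hu : IsJacobsthal3Rec u) (n : ℕ) :
    u (n + 1) + u (n + 2) + u (n + 3) = 2 * (u n + u (n + 1) + u (n + 2)) := by
  rw [hu n]; noncomm_ring

theorem sum_three_eq_zero (hu : IsJacobsthal3Rec u) (h₀ : u 0 + u 1 + u 2 = 0) (n : ℕ) :
    u n + u (n + 1) + u (n + 2) = 0 := by
  induction n with
  | zero => exact h₀
  | succ n ih => rw [add_assoc n 1 1, add_assoc n 1 2, hu.sum_three_succ, ih, mul_zero]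

theorem periodic_three (hu : IsJacobsthal3Rec u) (h₀ : u 0 + u 1 + u 2 = 0) :
    Function.Periodic u 3 := fun n => by
  have hsum := hu.sum_three_eq_zero h₀ n
  rw [hu n, ← sub_eq_zero, ← hsum]; noncomm_ring

end IsJacobsthal3Rec

theorem isJacobsthal3Rec_J3 : IsJacobsthal3Rec J3 := fun n => by rw [J3]

theorem isJacobsthal3Rec_jL3 : IsJacobsthal3Rec jL3 := fun n => by rw [jL3]

def jL3SubJ3AddTwo (n : ℕ) : ℤ := jL3 n - J3 (n + 2)

theorem jL3SubJ3AddTwo_periodic : Function.Periodic jL3SubJ3AddTwo 3 :=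
  (isJacobsthal3Rec_jL3.sub (isJacobsthal3Rec_J3.comp_add 2)).periodic_three (by decide)

theorem jQ_sub_JQ_add_two (n : ℕ) :
    jQ n - JQ (n + 2) = (jL3SubJ3AddTwo n : ℝ) + (jL3SubJ3AddTwo (n + 1) : ℝ) * qi +
      (jL3SubJ3AddTwo (n + 2) : ℝ) * qj + (jL3SubJ3AddTwo (n + 3) : ℝ) * qk := by
  simp only [jQ, JQ, jL3SubJ3AddTwo, Int.cast_sub, Quaternion.coe_sub, sub_mul, Nat.add_assoc,
    Nat.reduceAdd]
  abel

theorem third_order_jacobsthal_lucas_minus_shifted_jacobsthal (n : ℕ) :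
    (n % 3 = 0 → jQ n - JQ (n + 2) = 1 - qi + qk) ∧
    (n % 3 = 1 → jQ n - JQ (n + 2) = -1 + qj - qk) ∧
    (n % 3 = 2 → jQ n - JQ (n + 2) = qi - qj) := by
  have hmod (m : ℕ) := (jL3SubJ3AddTwo_periodic.map_mod_nat m).symm
  refine ⟨fun h => ?_, fun h => ?_, fun h => ?_⟩ <;>
  · rw [jQ_sub_JQ_add_two, hmod n, hmod (n + 1), hmod (n + 2), hmod (n + 3),
      show (n + 1) % 3 = (n % 3 + 1) % 3 by omega, show (n + 2) % 3 = (n % 3 + 2) % 3 by omega,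
      show (n + 3) % 3 = n % 3 by omega, h]
    norm_num [jL3SubJ3AddTwo, J3, jL3, sub_eq_add_neg]
end

section
/- For every integer n ≥ 0: Σ_{s=0}^{n} jQ^{(3)}_s equals jQ^{(3)}_{n+1} + (1 − 4i − 5j − 7k) if n ≡ 0 (mod 3), equals jQ^{(3)}_{n+1} − 2(1 + 2i + j + 5k) if n ≡ 1 (mod 3), and equals jQ^{(3)}_{n+1} − (2 + i + 5j + 10k) if n ≡ 2 (mod 3). -/
open Quaternion

/-! For a sequence with `u (n + 3) = u (n + 2) + u (n + 1) + 2 u n`, adding the three terms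
`u (n + 1) + u (n + 2) + u (n + 3)` to the partial sum up to `n` advances `u (n + 1)` to
`u (n + 4)`. Hence the defect `∑_{s ≤ n} u s - u (n + 1)` is `3`-periodic in `n`, and the
theorem reduces to computing it for `n = 0, 1, 2` on the Jacobsthal-Lucas quaternions, which
satisfy the recurrence componentwise. -/

theorem periodic_sum_range_succ_sub_of_add_three {M : Type*} [AddCommGroup M] {u : ℕ → M}
    (hu : ∀ n, u (n + 3) = u (n + 2) + u (n + 1) + 2 • u n) :
    Function.Periodic (fun n ↦ ∑ s ∈ Finset.range (n + 1), u s - u (n + 1)) 3 := by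
  intro n
  simp only [Finset.sum_range_succ, hu (n + 1)]
  abel

theorem ofNat_eq_smul_one (R A : Type*) [CommSemiring R] [Semiring A] [Algebra R A]
    (m : ℕ) [m.AtLeastTwo] : (ofNat(m) : A) = (ofNat(m) : R) • (1 : A) := by
  rw [← Algebra.algebraMap_eq_smul_one, map_ofNat]

theorem jQ_eq_smul (n : ℕ) :
    jQ n = (jL3 n : ℝ) • 1 + (jL3 (n + 1) : ℝ) • qi + (jL3 (n + 2) : ℝ) • qj +
      (jL3 (n + 3) : ℝ) • qk := by
  simp only [jQ, Quaternion.coe_mul_eq_smul, ← Algebra.algebraMap_eq_smul_one,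
    Quaternion.algebraMap_def]

theorem jQ_add_three (n : ℕ) : jQ (n + 3) = jQ (n + 2) + jQ (n + 1) + 2 • jQ n := by
  simp only [jQ_eq_smul, jL3_add_three, Int.cast_add, Int.cast_mul, Int.cast_ofNat]
  module

theorem third_order_jacobsthal_lucas_quaternion_partial_sums (n : ℕ) :
    (n % 3 = 0 → ∑ s ∈ Finset.range (n + 1), jQ s =
      jQ (n + 1) + (1 - 4 * qi - 5 * qj - 7 * qk)) ∧
    (n % 3 = 1 → ∑ s ∈ Finset.range (n + 1), jQ s =
      jQ (n + 1) - 2 * (1 + 2 * qi + qj + 5 * qk)) ∧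
    (n % 3 = 2 → ∑ s ∈ Finset.range (n + 1), jQ s =
      jQ (n + 1) - (2 + qi + 5 * qj + 10 * qk)) := by
  have key : ∑ s ∈ Finset.range (n + 1), jQ s =
      jQ (n + 1) + (∑ s ∈ Finset.range (n % 3 + 1), jQ s - jQ (n % 3 + 1)) := by
    rw [(periodic_sum_range_succ_sub_of_add_three jQ_add_three).map_mod_nat n, add_sub_cancel]
  obtain ⟨defect_zero, defect_one, defect_two⟩ :
      ∑ s ∈ Finset.range 1, jQ s - jQ 1 = 1 - 4 * qi - 5 * qj - 7 * qk ∧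
      ∑ s ∈ Finset.range 2, jQ s - jQ 2 = -(2 * (1 + 2 * qi + qj + 5 * qk)) ∧
      ∑ s ∈ Finset.range 3, jQ s - jQ 3 = -(2 + qi + 5 * qj + 10 * qk) := by
    -- `module` only treats real scalars as coefficients, so numerals of `ℍ[ℝ]` become `r • 1`.
    simp only [ofNat_eq_smul_one ℝ ℍ[ℝ], smul_mul_assoc, one_mul]
    norm_num [Finset.sum_range_succ, jQ_eq_smul, jL3]
    refine ⟨?_, ?_, ?_⟩ <;> module
  refine ⟨fun h ↦ ?_, fun h ↦ ?_, fun h ↦ ?_⟩ <;> rw [key, h]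
  · rw [defect_zero]
  · rw [defect_one, sub_eq_add_neg]
  · rw [defect_two, sub_eq_add_neg]
end

section
/- In the ring of formal power series over the real quaternions, (1 − t − t² − 2t³) · Σ_{n=0}^{∞} JQ^{(3)}_n t^n = (i + j + 2k) + (1 + j + 3k)·t + 2(j + k)·t²; equivalently, the generating function of the sequence {JQ^{(3)}_n} is [(i + j + 2k) + t(1 + j + 3k) + 2t²(j + k)] / (1 − t − t² − 2t³). -/
open Quaternion

/-! Multiplying the generating function of a sequence satisfying an order three linear recurrence
by the characteristic polynomial `1 - p t - q t² - r t³` kills every coefficient from `t³` on, so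
the product is the polynomial read off the first three terms. For the Jacobsthal quaternions the
recurrence is inherited componentwise from `J3`. -/

-- `QuaternionAlgebra.re_ofNat` and its siblings do not fire on `ℍ[R]`; going through the
-- coercion from `R` makes numerals transparent to `simp`.
theorem Quaternion.ofNat_eq_coe {R : Type*} [CommRing R] (n : ℕ) [n.AtLeastTwo] :
    (ofNat(n) : ℍ[R]) = ((ofNat(n) : R) : ℍ[R]) := rfl

theorem PowerSeries.mul_mk_eq_of_linear_recurrence {R : Type*} [Ring R] (p q r : R) (a : ℕ → R)
    (h : ∀ n, a (n + 3) = p * a (n + 2) + q * a (n + 1) + r * a n) :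
    (1 - C p * X - C q * X ^ 2 - C r * X ^ 3) * mk a =
      C (a 0) + C (a 1 - p * a 0) * X + C (a 2 - p * a 1 - q * a 0) * X ^ 2 := by
  ext (_ | _ | _ | n) <;> simp [sub_mul, mul_assoc, coeff_X_pow_mul', coeff_succ_X_mul]
  rw [h]
  abel

-- `qi`, `qj`, `qk` are unfolded only after the products are split, since `simp` cannot take
-- components of the bare literals.
@[simp] theorem JQ_re (n : ℕ) : (JQ n).re = J3 n := by simp [JQ]; simp [qi, qj, qk]
@[simp] theorem JQ_imI (n : ℕ) : (JQ n).imI = J3 (n + 1) := by simp [JQ]; simp [qi, qj, qk]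
@[simp] theorem JQ_imJ (n : ℕ) : (JQ n).imJ = J3 (n + 2) := by simp [JQ]; simp [qi, qj, qk]
@[simp] theorem JQ_imK (n : ℕ) : (JQ n).imK = J3 (n + 3) := by simp [JQ]; simp [qi, qj, qk]

theorem JQ_add_three (n : ℕ) : JQ (n + 3) = JQ (n + 2) + JQ (n + 1) + 2 * JQ n := by
  ext <;> simp [two_mul, J3]

open PowerSeries in
theorem third_order_jacobsthal_quaternion_generating_function :
    ((1 : ℍ[ℝ]⟦X⟧) - X - X ^ 2 - 2 * X ^ 3) * PowerSeries.mk JQ =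
      C (R := ℍ[ℝ]) (qi + qj + 2 * qk) + C (R := ℍ[ℝ]) (1 + qj + 3 * qk) * X
        + C (R := ℍ[ℝ]) (2 * (qj + qk)) * X ^ 2 := by
  have h := mul_mk_eq_of_linear_recurrence 1 1 2 JQ (by simpa using JQ_add_three)
  simp only [map_one, map_ofNat, one_mul] at h
  have h0 : JQ 0 = qi + qj + 2 * qk := by
    ext <;> simp [J3, Quaternion.ofNat_eq_coe] <;> simp [qi, qj, qk]
  have h1 : JQ 1 - JQ 0 = 1 + qj + 3 * qk := by
    ext <;> simp [J3, Quaternion.ofNat_eq_coe] <;> simp [qj, qk] <;> norm_num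
  have h2 : JQ 2 - JQ 1 - JQ 0 = 2 * (qj + qk) := by
    ext <;> simp [J3, Quaternion.ofNat_eq_coe] <;> simp [qj, qk] <;> norm_num
  rw [h, h2, h1, h0]
end

section
/- For every integer n ≥ 1, JQ^{(3)}_{n+2} = JQ^{(3)}_2 · J^{(3)}_{n+1} + (JQ^{(3)}_1 + 2·JQ^{(3)}_0) · J^{(3)}_n + 2·JQ^{(3)}_1 · J^{(3)}_{n−1}. -/
open Quaternion

/-!
A sequence in a module satisfying `a (n + 3) = a (n + 2) + a (n + 1) + 2 a n` is determined by
its first three terms, and such sequences are closed under sums, shifts and `n ↦ J3 n • x`.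
Hence `m ↦ a (m + 3)` equals the matching combination of shifted `J3`'s, as both solve the
recurrence and agree for `m = 0, 1, 2`. The Jacobsthal quaternions solve it coordinatewise.
-/

theorem J3_add_three (n : ℕ) : J3 (n + 3) = J3 (n + 2) + J3 (n + 1) + 2 * J3 n := by
  rw [J3]

def J3Rec {M : Type*} [AddCommMonoid M] (a : ℕ → M) : Prop :=
  ∀ n, a (n + 3) = a (n + 2) + a (n + 1) + 2 • a n

namespace J3Rec

variable {M : Type*}

theorem ext [AddCommMonoid M] {a b : ℕ → M} (ha : J3Rec a) (hb : J3Rec b)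
    (h0 : a 0 = b 0) (h1 : a 1 = b 1) (h2 : a 2 = b 2) : a = b := by
  funext n
  induction n using Nat.strong_induction_on with
  | _ n ih =>
    match n, ih with
    | 0, _ => exact h0
    | 1, _ => exact h1
    | 2, _ => exact h2
    | m + 3, ih => rw [ha, hb, ih m (by omega), ih (m + 1) (by omega), ih (m + 2) (by omega)]

theorem add [AddCommMonoid M] {a b : ℕ → M} (ha : J3Rec a) (hb : J3Rec b) :
    J3Rec (a + b) := fun n => by
  simp only [Pi.add_apply, ha n, hb n, nsmul_add]
  abel

theorem comp_add [AddCommMonoid M] {a : ℕ → M} (ha : J3Rec a) (k : ℕ) :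
    J3Rec (fun n => a (n + k)) := fun n => by
  simpa only [Nat.add_right_comm _ k] using ha (n + k)

variable {R : Type*} [CommRing R] [AddCommGroup M] [Module R M]

theorem J3_smul (x : M) : J3Rec (fun n => (J3 n : R) • x) := fun n => by
  simp only [J3_add_three, Int.cast_add, Int.cast_mul, Int.cast_ofNat, add_smul, mul_smul,
    ofNat_smul_eq_nsmul]

theorem eq_J3_smul {a : ℕ → M} (ha : J3Rec a) (m : ℕ) :
    a (m + 3) = (J3 (m + 2) : R) • a 2 + (J3 (m + 1) : R) • (a 1 + 2 • a 0)
      + (J3 m : R) • (2 • a 1) := by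
  let b : ℕ → M := fun m =>
    (J3 (m + 2) : R) • a 2 + (J3 (m + 1) : R) • (a 1 + 2 • a 0) + (J3 m : R) • (2 • a 1)
  have hb : J3Rec b :=
    (((J3_smul _).comp_add 2).add ((J3_smul _).comp_add 1)).add (J3_smul _)
  refine congrFun (ext (ha.comp_add 3) hb ?_ ?_ ?_) m <;>
    norm_num [b, ha _, J3] <;> module

end J3Rec

theorem JQ_eq (n : ℕ) : JQ n = (J3 n : ℝ) • (1 : ℍ[ℝ]) + (J3 (n + 1) : ℝ) • qi
    + (J3 (n + 2) : ℝ) • qj + (J3 (n + 3) : ℝ) • qk := by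
  simp only [JQ, Algebra.smul_def, mul_one]
  rfl

theorem j3Rec_JQ : J3Rec JQ := by
  rw [show JQ = _ from funext JQ_eq]
  exact ((((J3Rec.J3_smul _).add ((J3Rec.J3_smul _).comp_add 1)).add
    ((J3Rec.J3_smul _).comp_add 2)).add ((J3Rec.J3_smul _).comp_add 3))

theorem third_order_jacobsthal_quaternion_recurrence_in_terms_of_numbers
    (n : ℕ) (hn : 1 ≤ n) :
    JQ (n + 2) = (J3 (n + 1) : ℝ) • JQ 2 + (J3 n : ℝ) • (JQ 1 + 2 * JQ 0)
      + (J3 (n - 1) : ℝ) • (2 * JQ 1) := by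
  obtain ⟨m, rfl⟩ : ∃ m, n = m + 1 := ⟨n - 1, by omega⟩
  simpa only [Nat.add_sub_cancel, two_mul, two_nsmul] using j3Rec_JQ.eq_J3_smul (R := ℝ) m
end
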